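/- arXiv:2108.08175 — 4 statements merged into one kernel-verified Lean document; each statement's English description precedes it below -/
import Mathlib

section
/- Let r, s : ℤ^n → ℝ be group homomorphisms. If r(z) ≥ 0 if and only if s(z) ≥ 0 for all z ∈ ℤ^n, and both r and s are nonzero, then r and s are positive scalar multiples of each other. -/
/-- If two nonzero homomorphisms `r, s : ℤ^n → ℝ` satisfy `r z ≥ 0 ↔ s z ≥ 0`
    for all `z`, then they are positive scalar multiples of each other. -/
theorem pos_scalar_multiple_of_same_signs (n : ℕ) (r s : (Fin n → ℤ) →+ ℝ)
    (h : ∀ z, 0 ≤ r z ↔ 0 ≤ s z) (hr : r ≠ 0) (hs : s ≠ 0) :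
    ∃ c : ℝ, 0 < c ∧ ∀ z, r z = c * s z := by
  obtain ⟨w, hw⟩ : ∃ w, s w ≠ 0 := by
    by_contra hc; push_neg at hc
    exact hs (AddMonoidHom.ext fun z => hc z)
  obtain ⟨z₀, hsz₀⟩ : ∃ z₀, 0 < s z₀ := by
    rcases hw.lt_or_gt with h1 | h1
    · exact ⟨-w, by simpa using h1⟩
    · exact ⟨w, h1⟩
  have hrz₀ : 0 < r z₀ := by
    rcases lt_or_ge 0 (r z₀) with h1 | h1
    · exact h1
    · have h2 : (0:ℝ) ≤ r (-z₀) := by simpa using neg_nonneg.mpr h1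
      have h3 := (h _).mp h2
      simp only [map_neg] at h3
      linarith
  refine ⟨r z₀ / s z₀, div_pos hrz₀ hsz₀, fun z => ?_⟩
  have key : ∀ (a b : ℤ), ((0:ℝ) ≤ a * r z + b * r z₀ ↔ (0:ℝ) ≤ a * s z + b * s z₀) := by
    intro a b
    have := h (a • z + b • z₀)
    rw [map_add, map_add, map_zsmul, map_zsmul, map_zsmul, map_zsmul] at this
    simpa only [zsmul_eq_mul] using this
  have main : r z * s z₀ = r z₀ * s z := by
    by_contra hne
    rcases lt_or_gt_of_ne hne with hlt | hlt
    · -- r z / r z₀ < s z / s z₀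
      have hdiv : r z / r z₀ < s z / s z₀ := by
        rw [div_lt_div_iff₀ hrz₀ hsz₀]; nlinarith
      obtain ⟨q, hq1, hq2⟩ := exists_rat_btwn hdiv
      have hden : (0:ℝ) < (q.den : ℝ) := by positivity
      -- from r z / r z₀ < q : q.den * r z < q.num * r z₀
      have h1 : (q.den : ℝ) * r z < (q.num : ℝ) * r z₀ := by
        rw [div_lt_iff₀ hrz₀, Rat.cast_def, div_mul_eq_mul_div, lt_div_iff₀ hden] at hq1
        nlinarith
      have h2 := (key (-(q.den:ℤ)) q.num).mp (by push_cast; linarith)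
      push_cast at h2
      -- so s z ≤ q * s z₀ i.e. s z / s z₀ ≤ q, contradiction
      have h3 : s z / s z₀ ≤ (q:ℝ) := by
        rw [div_le_iff₀ hsz₀, Rat.cast_def, div_mul_eq_mul_div, le_div_iff₀ hden]
        nlinarith
      linarith
    · have hdiv : s z / s z₀ < r z / r z₀ := by
        rw [div_lt_div_iff₀ hsz₀ hrz₀]; nlinarith
      obtain ⟨q, hq1, hq2⟩ := exists_rat_btwn hdiv
      have hden : (0:ℝ) < (q.den : ℝ) := by positivity
      have h1 : (q.num : ℝ) * r z₀ < (q.den : ℝ) * r z := by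
        rw [lt_div_iff₀ hrz₀, Rat.cast_def, div_mul_eq_mul_div, div_lt_iff₀ hden] at hq2
        nlinarith
      have h2 := (key (q.den:ℤ) (-q.num)).mp (by push_cast; linarith)
      push_cast at h2
      have h3 : (q:ℝ) ≤ s z / s z₀ := by
        rw [le_div_iff₀ hsz₀, Rat.cast_def, div_mul_eq_mul_div, div_le_iff₀ hden]
        nlinarith
      linarith
  field_simp
  nlinarith [main, hsz₀]
end

section
/- With notation as above (k = p_1^{m_1}⋯p_n^{m_n}, γ(t_i) = multiplication by p_i^{m_i} on ℤ[1/k], ρ_- (t_i) = −m_i log p_i), the set Q_- = {x ∈ ℤ[1/k] : |x| ≤ 1} is strictly confining: there exists z ∈ ℤ^n with ρ_-(z) > 0 and γ(z)(Q_-) a proper subset of Q_-. -/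
/-!
Take `z = (-1, …, -1)`. Then `γ(z)` is division by `k = ∏ pᵢ ^ mᵢ` and `ρ_-(z) = log k > 0`;
division by `k > 1` maps the unit ball of `ℤ[1/k]` into itself, but `1` is not in the image
since its only preimage `k` has absolute value `> 1`.
-/

/-- `ℤ[1/k]`: the set of rationals with denominator dividing a power of `k`. -/
def Zinv (k : ℕ) : Set ℚ := {x | ∃ a : ℤ, ∃ e : ℕ, x = (a : ℚ) / (k : ℚ) ^ e}

lemma one_mem_Zinv (k : ℕ) : (1 : ℚ) ∈ Zinv k := ⟨1, 0, by simp⟩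

lemma inv_mul_mem_Zinv {k : ℕ} {x : ℚ} (hx : x ∈ Zinv k) : (k : ℚ)⁻¹ * x ∈ Zinv k := by
  obtain ⟨a, e, rfl⟩ := hx
  exact ⟨a, e + 1, by rw [pow_succ]; field_simp⟩

lemma inv_mul_image_unitBall_Zinv_ssubset {k : ℕ} (hk : 1 < k) :
    (fun x : ℚ => (k : ℚ)⁻¹ * x) '' {x | x ∈ Zinv k ∧ |x| ≤ 1} ⊂ {x | x ∈ Zinv k ∧ |x| ≤ 1} := by
  have hkQ : (1 : ℚ) < k := by exact_mod_cast hk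
  refine ⟨?_, fun hsub => ?_⟩
  · rintro _ ⟨x, ⟨hxk, hx1⟩, rfl⟩
    refine ⟨inv_mul_mem_Zinv hxk, ?_⟩
    rw [abs_mul, abs_inv, Nat.abs_cast]
    exact mul_le_one₀ (inv_le_one_of_one_le₀ hkQ.le) (abs_nonneg x) hx1
  · obtain ⟨x, ⟨-, hx1⟩, hx⟩ := hsub ⟨one_mem_Zinv k, by simp⟩
    have hxk : x = k := by
      simp only at hx
      field_simp at hx
      linarith
    rw [hxk, Nat.abs_cast] at hx1
    linarith

lemma one_lt_prod_pow {n : ℕ} (hn : 0 < n) {p m : Fin n → ℕ} (hp : ∀ i, 1 < p i)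
    (hm : ∀ i, 1 ≤ m i) : 1 < ∏ j, p j ^ m j :=
  have hpow (j : Fin n) : 1 < p j ^ m j := Nat.one_lt_pow (by have := hm j; omega) (hp j)
  (hpow ⟨0, hn⟩).trans_le <| Finset.single_le_prod' (fun j _ => (hpow j).le) (Finset.mem_univ _)

lemma prod_zpow_neg_mul_eq_inv {n : ℕ} (p m : Fin n → ℕ) :
    ∏ j, (p j : ℚ) ^ (-1 * (m j : ℤ)) = ((∏ j, p j ^ m j : ℕ) : ℚ)⁻¹ := by
  push_cast
  simp [← Finset.prod_inv_distrib, zpow_neg]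

lemma neg_sum_neg_mul_log_eq_log_prod {n : ℕ} {p : Fin n → ℕ} (hp : ∀ i, p i ≠ 0)
    (m : Fin n → ℕ) :
    -∑ j, ((-1 : ℤ) : ℝ) * (m j : ℝ) * Real.log (p j) = Real.log (∏ j, p j ^ m j : ℕ) := by
  push_cast
  rw [Real.log_prod (fun j _ => by have := hp j; positivity)]
  simp [Real.log_pow]

theorem Qminus_strictly_confining_general (n : ℕ) (hn : 0 < n) (p m : Fin n → ℕ)
    (hp : ∀ i, Nat.Prime (p i)) (hm : ∀ i, 1 ≤ m i)
    (μ : (Fin n → ℤ) → ℚ)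
    (hμ : ∀ z, μ z = ∏ j, (p j : ℚ) ^ (z j * (m j : ℤ)))
    (ρ : (Fin n → ℤ) → ℝ)
    (hρ : ∀ z, ρ z = -∑ j, (z j : ℝ) * (m j : ℝ) * Real.log (p j))
    (Qm : Set ℚ) (hQm : Qm = {x | x ∈ Zinv (∏ j, p j ^ m j) ∧ |x| ≤ 1}) :
    ∃ z : Fin n → ℤ, 0 < ρ z ∧ (fun x : ℚ => μ z * x) '' Qm ⊂ Qm := by
  have hk : 1 < ∏ j, p j ^ m j := one_lt_prod_pow hn (fun i => (hp i).one_lt) hm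
  refine ⟨fun _ => -1, ?_, ?_⟩
  · rw [hρ, neg_sum_neg_mul_log_eq_log_prod (fun i => (hp i).ne_zero)]
    exact Real.log_pos (by exact_mod_cast hk)
  · rw [hμ, prod_zpow_neg_mul_eq_inv, hQm]
    exact inv_mul_image_unitBall_Zinv_ssubset hk

/-- The unit ball `Q_- = {x ∈ ℤ[1/k] : |x| ≤ 1}` is *strictly* confining:
    there is `z` with `ρ_-(z) > 0` and `γ(z)(Q_-) ⊊ Q_-`. -/
theorem Qminus_strictly_confining (n : ℕ) (hn : 0 < n) (p m : Fin n → ℕ)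
    (hp : ∀ i, Nat.Prime (p i)) (hinj : Function.Injective p) (hm : ∀ i, 1 ≤ m i)
    (μ : (Fin n → ℤ) → ℚ)
    (hμ : ∀ z, μ z = ∏ j, (p j : ℚ) ^ (z j * (m j : ℤ)))
    (ρ : (Fin n → ℤ) → ℝ)
    (hρ : ∀ z, ρ z = -∑ j, (z j : ℝ) * (m j : ℝ) * Real.log (p j))
    (Qm : Set ℚ) (hQm : Qm = {x | x ∈ Zinv (∏ j, p j ^ m j) ∧ |x| ≤ 1}) :
    ∃ z : Fin n → ℤ, 0 < ρ z ∧ (fun x : ℚ => μ z * x) '' Qm ⊂ Qm :=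
  Qminus_strictly_confining_general n hn p m hp hm μ hμ ρ hρ Qm hQm
end

section
/- Let G = H ⋊_γ ℤ^n, let ρ : ℤ^n → ℝ be a nonzero homomorphism, and let Q ⊆ H be a symmetric subset confining under γ with respect to ρ. If z ∈ ℤ^n satisfies ρ(z) > 0 and γ(z)(Q) = Q, and moreover γ(w)(Q) = Q for every w ∈ ℤ^n with ρ(w) ≥ 0, then Q = H. -/
/-- If `Q` is confining under `γ` with respect to `ρ`, and `γ(w)(Q) = Q` for every
    `w` with `ρ(w) ≥ 0` (with some `z` satisfying `ρ(z) > 0` and `γ(z)(Q) = Q`),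
    then `Q = H`. -/
theorem confining_not_strict_implies_all {H : Type*} [Group H] (n : ℕ)
    (γ : (Fin n → ℤ) → H ≃* H)
    (hγ : ∀ z w h, γ (z + w) h = γ z (γ w h))
    (ρ : (Fin n → ℤ) →+ ℝ) (hρ : ρ ≠ 0)
    (Q : Set H)
    (hsymm : ∀ q ∈ Q, q⁻¹ ∈ Q)
    (ha : ∀ z, 0 ≤ ρ z → ∀ q ∈ Q, γ z q ∈ Q)
    (hb : ∀ h : H, ∃ z, γ z h ∈ Q)
    (hc : ∃ z0, ∀ q ∈ Q, ∀ q' ∈ Q, γ z0 (q * q') ∈ Q)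
    (z : Fin n → ℤ) (hz : 0 < ρ z) (hzQ : ⇑(γ z) '' Q = Q)
    (hall : ∀ w, 0 ≤ ρ w → ⇑(γ w) '' Q = Q) :
    Q = Set.univ := by
  ext h
  simp only [Set.mem_univ, iff_true]
  obtain ⟨w, hw⟩ := hb h
  obtain ⟨k, hk⟩ := Archimedean.arch (-ρ w) hz
  have hkz : ρ ((k : ℤ) • z) = (k : ℝ) * ρ z := by
    rw [map_zsmul, zsmul_eq_mul]; push_cast; ring
  have hρv : 0 ≤ ρ ((k : ℤ) • z + w) := by
    rw [map_add, hkz]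
    have : -ρ w ≤ (k : ℝ) * ρ z := by
      simpa [nsmul_eq_mul] using hk
    linarith
  have h1 : γ ((k : ℤ) • z + w) h ∈ Q := by
    rw [hγ]
    exact ha _ (by rw [hkz]; positivity) _ hw
  rw [← hall _ hρv] at h1
  obtain ⟨q, hq, heq⟩ := h1
  rwa [← (γ _).injective heq]
end

section
/- Suppose Q ⊆ H is strictly confining under γ with respect to a nonzero homomorphism ρ : ℤ^n → ℝ, witnessed by some w ∈ ℤ^n with ρ(w) > 0 and γ(w)(Q) ⊊ Q. Then for every z ∈ ℤ^n: ρ(z) > 0 implies γ(z)(Q) ⊊ Q, and conversely γ(z)(Q) ⊊ Q implies ρ(z) > 0. -/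
/-- If `Q` is strictly confining with respect to `ρ`, then for every `z`,
    `ρ(z) > 0` if and only if `γ(z)(Q) ⊊ Q`. -/
theorem strictly_confining_iff_pos {H : Type*} [Group H] (n : ℕ)
    (γ : (Fin n → ℤ) → H ≃* H)
    (hγ : ∀ z w h, γ (z + w) h = γ z (γ w h))
    (ρ : (Fin n → ℤ) →+ ℝ) (hρ : ρ ≠ 0)
    (Q : Set H)
    (hsymm : ∀ q ∈ Q, q⁻¹ ∈ Q)
    (ha : ∀ z, 0 ≤ ρ z → ∀ q ∈ Q, γ z q ∈ Q)
    (hb : ∀ h : H, ∃ z, γ z h ∈ Q)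
    (hc : ∃ z0, ∀ q ∈ Q, ∀ q' ∈ Q, γ z0 (q * q') ∈ Q)
    (w : Fin n → ℤ) (hw : 0 < ρ w) (hwQ : ⇑(γ w) '' Q ⊂ Q) :
    ∀ z : Fin n → ℤ, (0 < ρ z ↔ ⇑(γ z) '' Q ⊂ Q) := by
  have γ0 : ∀ h : H, γ (0 : Fin n → ℤ) h = h := by
    intro h
    have := hγ 0 0 h
    simp only [add_zero] at this
    exact ((γ (0 : Fin n → ℤ)).injective this.symm)
  intro z
  constructor
  · intro hz
    have hsub : ⇑(γ z) '' Q ⊆ Q := by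
      rintro _ ⟨q, hq, rfl⟩
      exact ha z hz.le q hq
    refine ⟨hsub, fun hQsub => ?_⟩
    have heq : ⇑(γ z) '' Q = Q := le_antisymm hsub hQsub
    have hk : ∀ k : ℕ, ⇑(γ ((k : ℤ) • z)) '' Q = Q := by
      intro k
      induction k with
      | zero =>
        simp only [Nat.cast_zero, zero_smul]
        ext h
        constructor
        · rintro ⟨q, hq, rfl⟩; simpa [γ0] using hq
        · intro hq; exact ⟨h, hq, γ0 h⟩
      | succ m ih =>
        have harg : ((m : ℤ) + 1) • z = z + (m : ℤ) • z := by
          rw [add_smul, one_smul, add_comm]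
        have hstep : ⇑(γ (((m : ℤ) + 1) • z)) '' Q = ⇑(γ z) '' (⇑(γ ((m : ℤ) • z)) '' Q) := by
          rw [harg, ← Set.image_comp]
          exact Set.image_congr fun q _ => hγ z ((m : ℤ) • z) q
        have : ⇑(γ (((m : ℤ) + 1) • z)) '' Q = Q := by
          rw [hstep, ih, heq]
        simpa [add_smul] using this
    -- pick k with ρ w ≤ k * ρ z
    obtain ⟨k, hkge⟩ := exists_nat_ge (ρ w / ρ z)
    have hkz : ρ w ≤ (k : ℝ) * ρ z := (div_le_iff₀ hz).mp hkge
    -- pick q0 ∈ Q \ γ w '' Q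
    obtain ⟨q0, hq0Q, hq0n⟩ := Set.exists_of_ssubset hwQ
    have hq0' : q0 ∈ ⇑(γ ((k : ℤ) • z)) '' Q := by rw [hk k]; exact hq0Q
    obtain ⟨q1, hq1Q, hq1⟩ := hq0'
    have hvpos : 0 ≤ ρ ((k : ℤ) • z - w) := by
      have : ρ ((k : ℤ) • z - w) = (k : ℝ) * ρ z - ρ w := by
        rw [map_sub, map_zsmul, zsmul_eq_mul]
        push_cast
        ring
      rw [this]
      linarith
    have hq2 : γ ((k : ℤ) • z - w) q1 ∈ Q := ha _ hvpos q1 hq1Q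
    have : q0 ∈ ⇑(γ w) '' Q := by
      refine ⟨γ ((k : ℤ) • z - w) q1, hq2, ?_⟩
      rw [← hγ w ((k : ℤ) • z - w) q1]
      have : w + ((k : ℤ) • z - w) = (k : ℤ) • z := by ring
      rw [this, hq1]
    exact hq0n this
  · intro hzQ
    by_contra hle
    push_neg at hle
    have h2 : Q ⊆ ⇑(γ z) '' Q := by
      intro q hq
      have hmem : γ (-z) q ∈ Q := ha (-z) (by simpa using hle) q hq
      refine ⟨γ (-z) q, hmem, ?_⟩
      rw [← hγ z (-z) q]
      simp only [add_neg_cancel]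
      exact γ0 q
    exact hzQ.not_subset h2
end
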